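/- arXiv:1810.00173 — 2 statements merged into one kernel-verified Lean document; each statement's English description precedes it below -/
import Mathlib

section
/- Let ζ, θ, u, v : ℝ → ℝ be differentiable with, for all t: sin(ζ t) ≠ 0, sin(θ t) ≠ 0, u′(t) = cos(ζ t)/sin(ζ t), v′(t) = cos(θ t)/(sin(ζ t)·sin(θ t)). Fix s ∈ ℝ and define F : ℝ² → ℝ³ by F(t,s) = (t − s·sin(θ t)·sin(ζ t), u t − s·sin(θ t)·cos(ζ t), v t − s·cos(θ t)). Then at every (t,s) the Euclidean inner product of the two partial derivatives satisfies ⟨∂F/∂t, ∂F/∂s⟩ = −1/(sin(ζ t)·sin(θ t)). -/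
open Real
open scoped RealInnerProductSpace

/-!
Euler's surface is the ruled surface `F (t, s) = c t - s • e t` over the curve
`c t = (t, u t, v t)`, with unit directions `e t = (sin θ sin ζ, sin θ cos ζ, cos θ)`.
Differentiating `‖e‖² = 1` gives `e' ⊥ e`, so `⟪∂ₜF, ∂ₛF⟫ = ⟪c' - s • e', -e⟫ = -⟪c', e⟫`; with the
prescribed `u'` and `v'`, `⟪c', e⟫ = (sin²θ sin²ζ + sin²θ cos²ζ + cos²θ) / (sin ζ sin θ)`,
whose numerator is `1`.
-/

/-- Euler's parametrization of a developable (tangent) surface. -/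
noncomputable def eulerF (ζ θ u v : ℝ → ℝ) (w : ℝ × ℝ) : EuclideanSpace ℝ (Fin 3) :=
  WithLp.toLp 2 ![w.1 - w.2 * sin (θ w.1) * sin (ζ w.1),
    u w.1 - w.2 * sin (θ w.1) * cos (ζ w.1),
    v w.1 - w.2 * cos (θ w.1)]

theorem HasDerivAt.toLp {𝕜 ι : Type*} [NontriviallyNormedField 𝕜] [Fintype ι] {E : ι → Type*}
    [∀ i, NormedAddCommGroup (E i)] [∀ i, NormedSpace 𝕜 (E i)] (p : ENNReal) [Fact (1 ≤ p)]
    {f : 𝕜 → ∀ i, E i} {f' : ∀ i, E i} {x : 𝕜} (h : HasDerivAt f f' x) :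
    HasDerivAt (fun t => WithLp.toLp p (f t)) (WithLp.toLp p f') x :=
  (PiLp.hasFDerivAt_toLp p (f x)).comp_hasDerivAt x h

section RuledSurface

variable {E : Type*} [NormedAddCommGroup E] [InnerProductSpace ℝ E]

theorem inner_deriv_self_eq_zero_of_norm_eq_one {e : ℝ → E} {t : ℝ}
    (he : DifferentiableAt ℝ e t) (hnorm : ∀ t, ‖e t‖ = 1) : ⟪deriv e t, e t⟫ = 0 := by
  have hconst : (fun t => ⟪e t, e t⟫) = fun _ => (1 : ℝ) := by
    funext t
    rw [real_inner_self_eq_norm_sq, hnorm, one_pow]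
  have hderiv := he.hasDerivAt.inner ℝ he.hasDerivAt
  rw [hconst] at hderiv
  have hzero := (hasDerivAt_const t (1 : ℝ)).unique hderiv
  linarith [real_inner_comm (e t) (deriv e t)]

def ruledSurface (c e : ℝ → E) (w : ℝ × ℝ) : E := c w.1 - w.2 • e w.1

theorem inner_deriv_ruledSurface {c e : ℝ → E} {t : ℝ} (s : ℝ) (hc : DifferentiableAt ℝ c t)
    (he : DifferentiableAt ℝ e t) (hnorm : ∀ t, ‖e t‖ = 1) :
    ⟪deriv (fun t' => ruledSurface c e (t', s)) t, deriv (fun s' => ruledSurface c e (t, s')) s⟫ =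
      -⟪deriv c t, e t⟫ := by
  have hdt : HasDerivAt (fun t' => ruledSurface c e (t', s)) (deriv c t - s • deriv e t) t :=
    hc.hasDerivAt.sub (he.hasDerivAt.const_smul s)
  have hds : HasDerivAt (fun s' => ruledSurface c e (t, s')) (-e t) s :=
    ((hasDerivAt_const s (c t)).sub ((hasDerivAt_id s).smul_const (e t))).congr_deriv
      (by simp)
  rw [hdt.deriv, hds.deriv, inner_neg_right, inner_sub_left, real_inner_smul_left,
    inner_deriv_self_eq_zero_of_norm_eq_one he hnorm, mul_zero, sub_zero]

end RuledSurface

section Euler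

variable (ζ θ u v : ℝ → ℝ)

noncomputable def eulerCurve (t : ℝ) : EuclideanSpace ℝ (Fin 3) := WithLp.toLp 2 ![t, u t, v t]

noncomputable def eulerDirection (t : ℝ) : EuclideanSpace ℝ (Fin 3) :=
  WithLp.toLp 2 ![sin (θ t) * sin (ζ t), sin (θ t) * cos (ζ t), cos (θ t)]

theorem eulerF_eq_ruledSurface :
    eulerF ζ θ u v = ruledSurface (eulerCurve u v) (eulerDirection ζ θ) := by
  funext w
  ext i
  fin_cases i <;>
    simp only [eulerF, ruledSurface, eulerCurve, eulerDirection, Fin.zero_eta, Fin.mk_one,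
      Fin.reduceFinMk, Fin.isValue, Matrix.cons_val_zero, Matrix.cons_val_one, Matrix.cons_val,
      PiLp.sub_apply, PiLp.smul_apply, smul_eq_mul] <;>
    ring

theorem norm_eulerDirection (t : ℝ) : ‖eulerDirection ζ θ t‖ = 1 := by
  rw [EuclideanSpace.norm_eq, Real.sqrt_eq_one, Fin.sum_univ_three]
  simp only [eulerDirection, PiLp.toLp_apply, Matrix.cons_val_zero, Matrix.cons_val_one,
    Matrix.cons_val_two, Matrix.head_cons, Matrix.tail_cons, Real.norm_eq_abs, sq_abs]
  linear_combination sin (θ t) ^ 2 * sin_sq_add_cos_sq (ζ t) + sin_sq_add_cos_sq (θ t)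

variable {ζ θ u v} {t : ℝ}

theorem differentiableAt_eulerDirection (hζ : DifferentiableAt ℝ ζ t)
    (hθ : DifferentiableAt ℝ θ t) : DifferentiableAt ℝ (eulerDirection ζ θ) t := by
  rw [differentiableAt_euclidean]
  intro i
  fin_cases i <;>
    simp only [eulerDirection, Fin.zero_eta, Fin.mk_one, Fin.reduceFinMk, Fin.isValue,
      Matrix.cons_val_zero, Matrix.cons_val_one, Matrix.cons_val] <;>
    fun_prop

theorem hasDerivAt_eulerCurve (hu : DifferentiableAt ℝ u t) (hv : DifferentiableAt ℝ v t) :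
    HasDerivAt (eulerCurve u v) (WithLp.toLp 2 ![1, deriv u t, deriv v t]) t := by
  refine HasDerivAt.toLp 2 (hasDerivAt_pi.2 fun i => ?_)
  fin_cases i
  exacts [hasDerivAt_id t, hu.hasDerivAt, hv.hasDerivAt]

-- With `x / 0 = 0` both sides vanish when `sin (ζ t) = 0` or `sin (θ t) = 0`.
theorem inner_eulerVelocity_eulerDirection (t : ℝ) :
    ⟪WithLp.toLp 2 ![1, cos (ζ t) / sin (ζ t), cos (θ t) / (sin (ζ t) * sin (θ t))],
      eulerDirection ζ θ t⟫ = 1 / (sin (ζ t) * sin (θ t)) := by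
  simp only [eulerDirection, PiLp.inner_apply, Fin.sum_univ_three,
    Matrix.cons_val_zero, Matrix.cons_val_one, Matrix.cons_val_two, Matrix.head_cons,
    Matrix.tail_cons, RCLike.inner_apply, conj_trivial]
  rcases eq_or_ne (sin (ζ t)) 0 with hζ | hζ
  · simp [hζ]
  rcases eq_or_ne (sin (θ t)) 0 with hθ | hθ
  · simp [hθ]
  field_simp
  linear_combination sin (θ t) ^ 2 * sin_sq_add_cos_sq (ζ t) + sin_sq_add_cos_sq (θ t)

end Euler

theorem euler_cross_term_of_first_fundamental_form_general
    (ζ θ u v : ℝ → ℝ)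
    (hζ : Differentiable ℝ ζ) (hθ : Differentiable ℝ θ)
    (hu : Differentiable ℝ u) (hv : Differentiable ℝ v)
    (hu' : ∀ t, deriv u t = cos (ζ t) / sin (ζ t))
    (hv' : ∀ t, deriv v t = cos (θ t) / (sin (ζ t) * sin (θ t))) :
    ∀ t s : ℝ,
      (⟪deriv (fun t' => eulerF ζ θ u v (t', s)) t,
         deriv (fun s' => eulerF ζ θ u v (t, s')) s⟫ : ℝ) =
        -1 / (sin (ζ t) * sin (θ t)) := by
  intro t s
  have hcurve := hasDerivAt_eulerCurve (hu t) (hv t)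
  rw [eulerF_eq_ruledSurface, inner_deriv_ruledSurface s hcurve.differentiableAt
    (differentiableAt_eulerDirection (hζ t) (hθ t)) (norm_eulerDirection ζ θ), hcurve.deriv,
    hu', hv', inner_eulerVelocity_eulerDirection, neg_div]

theorem euler_cross_term_of_first_fundamental_form
    (ζ θ u v : ℝ → ℝ)
    (hζ : Differentiable ℝ ζ) (hθ : Differentiable ℝ θ)
    (hu : Differentiable ℝ u) (hv : Differentiable ℝ v)
    (hsinζ : ∀ t, sin (ζ t) ≠ 0) (hsinθ : ∀ t, sin (θ t) ≠ 0)
    (hu' : ∀ t, deriv u t = cos (ζ t) / sin (ζ t))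
    (hv' : ∀ t, deriv v t = cos (θ t) / (sin (ζ t) * sin (θ t))) :
    ∀ t s : ℝ,
      (⟪deriv (fun t' => eulerF ζ θ u v (t', s)) t,
         deriv (fun s' => eulerF ζ θ u v (t, s')) s⟫ : ℝ) =
        -1 / (sin (ζ t) * sin (θ t)) :=
  euler_cross_term_of_first_fundamental_form_general ζ θ u v hζ hθ hu hv hu' hv'
end

section
/- Let p, q, r, ω : ℝ → ℝ be differentiable functions such that for all t: p(t)² + q(t)² + r(t)² = 1, p′(t)² + q′(t)² + r′(t)² = ω′(t)², and ω′(t) ≠ 0. Define λ = p·cos ω − (p′/ω′)·sin ω, μ = q·cos ω − (q′/ω′)·sin ω, ν = r·cos ω − (r′/ω′)·sin ω. Then for all t: λ(t)² + μ(t)² + ν(t)² = 1. -/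
/-!
Differentiating `p² + q² + r² = 1` shows that `(p, q, r)` is orthogonal to `(p′, q′, r′)`, and the
speed condition makes `(p′, q′, r′) / ω′` a unit vector. So `(λ, μ, ν)` is `cos ω` times one vector
of an orthonormal pair minus `sin ω` times the other, hence a unit vector.
-/

open Real

theorem mul_deriv_add_mul_deriv_add_mul_deriv_eq_zero {p q r : ℝ → ℝ} {c t : ℝ}
    (hp : DifferentiableAt ℝ p t) (hq : DifferentiableAt ℝ q t) (hr : DifferentiableAt ℝ r t)
    (hconst : ∀ s, p s ^ 2 + q s ^ 2 + r s ^ 2 = c) :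
    p t * deriv p t + q t * deriv q t + r t * deriv r t = 0 := by
  have hsum : HasDerivAt (fun s => p s ^ 2 + q s ^ 2 + r s ^ 2)
      (2 * (p t * deriv p t + q t * deriv q t + r t * deriv r t)) t := by
    refine ((hp.hasDerivAt.pow 2).add (hq.hasDerivAt.pow 2)).add (hr.hasDerivAt.pow 2)
      |>.congr_deriv ?_
    norm_num
    ring
  have hzero : HasDerivAt (fun s => p s ^ 2 + q s ^ 2 + r s ^ 2) 0 t :=
    funext hconst ▸ hasDerivAt_const t c
  linarith [hsum.unique hzero]

theorem cos_mul_sub_div_mul_sin_sq_sum_eq_one {x y z a b c w θ : ℝ}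
    (hunit : x ^ 2 + y ^ 2 + z ^ 2 = 1) (hspeed : a ^ 2 + b ^ 2 + c ^ 2 = w ^ 2)
    (horth : x * a + y * b + z * c = 0) (hw : w ≠ 0) :
    (x * cos θ - a / w * sin θ) ^ 2 + (y * cos θ - b / w * sin θ) ^ 2
      + (z * cos θ - c / w * sin θ) ^ 2 = 1 := by
  field_simp
  linear_combination cos θ ^ 2 * w ^ 2 * hunit + sin θ ^ 2 * hspeed
    - 2 * cos θ * sin θ * w * horth + w ^ 2 * sin_sq_add_cos_sq θ

theorem euler_lambda_mu_nu_unit_general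
    (p q r ω : ℝ → ℝ)
    (hp : Differentiable ℝ p) (hq : Differentiable ℝ q) (hr : Differentiable ℝ r)
    (hunit : ∀ t, (p t) ^ 2 + (q t) ^ 2 + (r t) ^ 2 = 1)
    (hspeed : ∀ t, (deriv p t) ^ 2 + (deriv q t) ^ 2 + (deriv r t) ^ 2 = (deriv ω t) ^ 2)
    (hω' : ∀ t, deriv ω t ≠ 0)
    (lam mu nu : ℝ → ℝ)
    (hlam : ∀ t, lam t = p t * cos (ω t) - (deriv p t / deriv ω t) * sin (ω t))
    (hmu : ∀ t, mu t = q t * cos (ω t) - (deriv q t / deriv ω t) * sin (ω t))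
    (hnu : ∀ t, nu t = r t * cos (ω t) - (deriv r t / deriv ω t) * sin (ω t)) :
    ∀ t : ℝ, (lam t) ^ 2 + (mu t) ^ 2 + (nu t) ^ 2 = 1 := by
  intro t
  have horth := mul_deriv_add_mul_deriv_add_mul_deriv_eq_zero (hp t) (hq t) (hr t) hunit
  rw [hlam, hmu, hnu]
  exact cos_mul_sub_div_mul_sin_sq_sum_eq_one (hunit t) (hspeed t) horth (hω' t)

theorem euler_lambda_mu_nu_unit
    (p q r ω : ℝ → ℝ)
    (hp : Differentiable ℝ p) (hq : Differentiable ℝ q) (hr : Differentiable ℝ r)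
    (hω : Differentiable ℝ ω)
    (hunit : ∀ t, (p t) ^ 2 + (q t) ^ 2 + (r t) ^ 2 = 1)
    (hspeed : ∀ t, (deriv p t) ^ 2 + (deriv q t) ^ 2 + (deriv r t) ^ 2 = (deriv ω t) ^ 2)
    (hω' : ∀ t, deriv ω t ≠ 0)
    (lam mu nu : ℝ → ℝ)
    (hlam : ∀ t, lam t = p t * cos (ω t) - (deriv p t / deriv ω t) * sin (ω t))
    (hmu : ∀ t, mu t = q t * cos (ω t) - (deriv q t / deriv ω t) * sin (ω t))
    (hnu : ∀ t, nu t = r t * cos (ω t) - (deriv r t / deriv ω t) * sin (ω t)) :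
    ∀ t : ℝ, (lam t) ^ 2 + (mu t) ^ 2 + (nu t) ^ 2 = 1 :=
  euler_lambda_mu_nu_unit_general p q r ω hp hq hr hunit hspeed hω' lam mu nu hlam hmu hnu
end
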